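/- Fix n ∈ ℕ with n ≥ 1 and real parameters a, b, α, β with (a−b+1|q)_n (β+1|q)_n (a+b+α+1|q)_n ≠ 0. Then for every real s: u_n^{α,β}(x(s+1),a,b)_q − u_n^{α,β}(x(s),a,b)_q = [2s+2]_q [α+β+n+1]_q · u_{n−1}^{α+1,β+1}(x(s+1/2), a+1/2, b−1/2)_q. -/
import Mathlib


open Finset

/-- The symmetric q-number `[s]_q = (q^{s/2} - q^{-s/2})/(q^{1/2} - q^{-1/2})`. -/
noncomputable def qnum (q s : ℝ) : ℝ :=
  (q ^ (s / 2) - q ^ (-s / 2)) / (q ^ ((1 : ℝ) / 2) - q ^ (-(1 : ℝ) / 2))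

/-- The symmetric q-factorial `[n]_q! = ∏_{m=1}^n [m]_q`. -/
noncomputable def qfact (q : ℝ) (n : ℕ) : ℝ :=
  ∏ m ∈ Finset.range n, qnum q ((m : ℝ) + 1)

/-- The symmetric q-Pochhammer symbol `(a|q)_k = ∏_{m=0}^{k-1} [a+m]_q`. -/
noncomputable def qpoch (q a : ℝ) (k : ℕ) : ℝ :=
  ∏ m ∈ Finset.range k, qnum q (a + (m : ℝ))

/-- The q-Racah polynomial `u_n^{α,β}(x(s),a,b)_q` on the lattice `x(s)=[s]_q[s+1]_q`. -/
noncomputable def racahU (q a b α β : ℝ) (n : ℕ) (s : ℝ) : ℝ :=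
  qpoch q (a - b + 1) n * qpoch q (β + 1) n * qpoch q (a + b + α + 1) n / qfact q n *
    ∑ k ∈ Finset.range (n + 1),
      qpoch q (-(n : ℝ)) k * qpoch q (α + β + (n : ℝ) + 1) k * qpoch q (a - s) k *
          qpoch q (a + s + 1) k /
        (qpoch q 1 k * qpoch q (a - b + 1) k * qpoch q (β + 1) k *
          qpoch q (a + b + α + 1) k)

/-- The alternative q-Racah polynomial `ũ_n^{α,β}(x(s),a,b)_q`. -/
noncomputable def racahUt (q a b α β : ℝ) (n : ℕ) (s : ℝ) : ℝ :=
  qpoch q (a - b + 1) n * qpoch q (2 * a - β + 1) n * qpoch q (a - b - α + 1) n / qfact q n *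
    ∑ k ∈ Finset.range (n + 1),
      qpoch q (-(n : ℝ)) k * qpoch q (2 * a - 2 * b - α - β + (n : ℝ) + 1) k *
          qpoch q (a - s) k * qpoch q (a + s + 1) k /
        (qpoch q 1 k * qpoch q (a - b + 1) k * qpoch q (2 * a - β + 1) k *
          qpoch q (a - b - α + 1) k)

/-- `σ(s) = [s-a]_q [s+b]_q [s+a-β]_q [b+α-s]_q`. -/
noncomputable def racahSigma (q a b α β s : ℝ) : ℝ :=
  qnum q (s - a) * qnum q (s + b) * qnum q (s + a - β) * qnum q (b + α - s)

/-- `σ(-s-1) = [s+a+1]_q [b-s-1]_q [s-a+β+1]_q [b+α+s+1]_q`. -/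
noncomputable def racahSigmaM (q a b α β s : ℝ) : ℝ :=
  qnum q (s + a + 1) * qnum q (b - s - 1) * qnum q (s - a + β + 1) * qnum q (b + α + s + 1)

/-- `σ̃(s) = [s-a]_q [s+b]_q [s-a+β]_q [b+α+s]_q`. -/
noncomputable def racahSigmaT (q a b α β s : ℝ) : ℝ :=
  qnum q (s - a) * qnum q (s + b) * qnum q (s - a + β) * qnum q (b + α + s)

/-- `σ̃(-s-1) = [s+a+1]_q [b-s-1]_q [s+a-β+1]_q [b+α-s-1]_q`. -/
noncomputable def racahSigmaTM (q a b α β s : ℝ) : ℝ :=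
  qnum q (s + a + 1) * qnum q (b - s - 1) * qnum q (s + a - β + 1) * qnum q (b + α - s - 1)

/-- `τ_n(s)` for the q-Racah polynomials. -/
noncomputable def racahTau (q a b α β : ℝ) (n : ℕ) (s : ℝ) : ℝ :=
  -qnum q (α + β + 2 * (n : ℝ) + 2) * qnum q (s + (n : ℝ) / 2) * qnum q (s + (n : ℝ) / 2 + 1) +
    qnum q (a + (n : ℝ) / 2 + 1) * qnum q (b - (n : ℝ) / 2 - 1) *
      qnum q (β + (n : ℝ) / 2 + 1 - a) * qnum q (b + α + (n : ℝ) / 2 + 1) -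
    qnum q (a + (n : ℝ) / 2) * qnum q (b - (n : ℝ) / 2) * qnum q (β + (n : ℝ) / 2 - a) *
      qnum q (b + α + (n : ℝ) / 2)

lemma sinh_mul (x y : ℝ) : Real.sinh x * Real.sinh y = (Real.cosh (x+y) - Real.cosh (x-y))/2 := by
  rw [Real.sinh_eq, Real.sinh_eq, Real.cosh_eq, Real.cosh_eq, Real.exp_add,
    Real.exp_sub, neg_add, Real.exp_add, neg_sub, Real.exp_sub, Real.exp_neg, Real.exp_neg]
  have h1 := Real.exp_ne_zero x
  have h2 := Real.exp_ne_zero y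
  field_simp
  ring

lemma sinh_key (L a s k : ℝ) :
    Real.sinh ((a-s-1)*L) * Real.sinh ((a+s+2+k)*L)
      - Real.sinh ((a-s+k)*L) * Real.sinh ((a+s+1)*L)
      = -(Real.sinh ((k+1)*L) * Real.sinh ((2*s+2)*L)) := by
  rw [sinh_mul, sinh_mul, sinh_mul,
    show (a-s-1)*L + (a+s+2+k)*L = (2*a+k+1)*L by ring,
    show (a-s-1)*L - (a+s+2+k)*L = -((k+2*s+3)*L) by ring,
    show (a-s+k)*L + (a+s+1)*L = (2*a+k+1)*L by ring,
    show (a-s+k)*L - (a+s+1)*L = (k-2*s-1)*L by ring,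
    show (k+1)*L + (2*s+2)*L = (k+2*s+3)*L by ring,
    show (k+1)*L - (2*s+2)*L = (k-2*s-1)*L by ring,
    Real.cosh_neg]
  ring

lemma qnum_sinh (q : ℝ) (hq0 : 0 < q) (t : ℝ) :
    qnum q t = Real.sinh (t * (Real.log q / 2)) / Real.sinh (Real.log q / 2) := by
  have h : ∀ u v : ℝ, (u/2)/(v/2) = u/v := by
    intro u v
    rcases eq_or_ne v 0 with rfl | hv
    · simp
    · field_simp
  unfold qnum
  rw [Real.rpow_def_of_pos hq0, Real.rpow_def_of_pos hq0, Real.rpow_def_of_pos hq0,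
    Real.rpow_def_of_pos hq0,
    show Real.log q * (t / 2) = t * (Real.log q / 2) by ring,
    show Real.log q * (-t / 2) = -(t * (Real.log q / 2)) by ring,
    show Real.log q * ((1:ℝ) / 2) = Real.log q / 2 by ring,
    show Real.log q * (-(1:ℝ) / 2) = -(Real.log q / 2) by ring,
    Real.sinh_eq, Real.sinh_eq, h]

lemma qnum_neg (q : ℝ) (hq0 : 0 < q) (t : ℝ) : qnum q (-t) = -qnum q t := by
  rw [qnum_sinh q hq0, qnum_sinh q hq0,
    show -t * (Real.log q / 2) = -(t * (Real.log q / 2)) by ring, Real.sinh_neg, neg_div]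

lemma qnum_ne_zero (q : ℝ) (hq0 : 0 < q) (hq1 : q ≠ 1) {t : ℝ} (ht : t ≠ 0) : qnum q t ≠ 0 := by
  have hL : Real.log q / 2 ≠ 0 :=
    div_ne_zero (Real.log_ne_zero_of_pos_of_ne_one hq0 hq1) two_ne_zero
  rw [qnum_sinh q hq0]
  exact div_ne_zero (fun h => (mul_ne_zero ht hL) (Real.sinh_eq_zero.mp h))
    (fun h => hL (Real.sinh_eq_zero.mp h))

lemma qnum_key (q : ℝ) (hq0 : 0 < q) (a s k : ℝ) :
    qnum q (a-s-1) * qnum q (a+s+2+k) - qnum q (a-s+k) * qnum q (a+s+1)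
      = -(qnum q (k+1) * qnum q (2*s+2)) := by
  simp only [qnum_sinh q hq0]
  rw [div_mul_div_comm, div_mul_div_comm, div_mul_div_comm, div_sub_div_same, ← neg_div]
  congr 1
  exact sinh_key _ a s k

lemma qpoch_succ_front (q x : ℝ) (k : ℕ) :
    qpoch q x (k+1) = qnum q x * qpoch q (x+1) k := by
  unfold qpoch
  rw [Finset.prod_range_succ', mul_comm]
  congr 1
  · norm_num
  · apply Finset.prod_congr rfl
    intro i _
    congr 1
    push_cast
    try ring

lemma qpoch_zero (q x : ℝ) : qpoch q x 0 = 1 := Finset.prod_range_zero _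

lemma qpoch_succ_back (q x : ℝ) (k : ℕ) :
    qpoch q x (k+1) = qpoch q x k * qnum q (x + k) := Finset.prod_range_succ _ _

lemma qfact_succ (q : ℝ) (k : ℕ) : qfact q (k+1) = qfact q k * qnum q (k+1) := by
  unfold qfact
  rw [Finset.prod_range_succ]
  try push_cast
  try ring_nf

lemma qpoch_ne_zero_of (q x : ℝ) {n k : ℕ} (h : qpoch q x n ≠ 0) (hk : k ≤ n) :
    qpoch q x k ≠ 0 := by
  intro h0
  apply h
  unfold qpoch at *
  obtain ⟨i, hi, hz⟩ := Finset.prod_eq_zero_iff.mp h0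
  exact Finset.prod_eq_zero (Finset.mem_range.mpr (lt_of_lt_of_le (Finset.mem_range.mp hi) hk)) hz

lemma qfact_ne_zero (q : ℝ) (hq0 : 0 < q) (hq1 : q ≠ 1) (n : ℕ) : qfact q n ≠ 0 := by
  unfold qfact
  rw [Finset.prod_ne_zero_iff]
  intro i _
  exact qnum_ne_zero q hq0 hq1 (by positivity)

lemma qpoch_one_ne_zero (q : ℝ) (hq0 : 0 < q) (hq1 : q ≠ 1) (n : ℕ) : qpoch q 1 n ≠ 0 := by
  unfold qpoch
  rw [Finset.prod_ne_zero_iff]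
  intro i _
  exact qnum_ne_zero q hq0 hq1 (by positivity)

theorem stmt_3 (q : ℝ) (hq0 : 0 < q) (hq1 : q ≠ 1) (n : ℕ) (hn : 1 ≤ n) (a b α β : ℝ)
    (hnz : qpoch q (a - b + 1) n * qpoch q (β + 1) n * qpoch q (a + b + α + 1) n ≠ 0) :
    ∀ s : ℝ,
      racahU q a b α β n (s + 1) - racahU q a b α β n s =
        qnum q (2 * s + 2) * qnum q (α + β + (n : ℝ) + 1) *
          racahU q (a + 1 / 2) (b - 1 / 2) (α + 1) (β + 1) (n - 1) (s + 1 / 2) := by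
  obtain ⟨m, rfl⟩ : ∃ m, n = m + 1 := ⟨n - 1, by omega⟩
  intro s
  unfold racahU
  simp only [Nat.add_sub_cancel]
  push_cast
  rw [← mul_sub, ← Finset.sum_sub_distrib, Finset.sum_range_succ']
  simp only [qpoch_zero, one_mul, mul_one, div_one, sub_self, add_zero]
  rw [Finset.mul_sum, Finset.mul_sum, Finset.mul_sum]
  apply Finset.sum_congr rfl
  intro j hj
  rw [div_sub_div_same]
  have hjm : j ≤ m := by
    have := Finset.mem_range.mp hj; omega
  have h1 := (mul_ne_zero_iff.mp (mul_ne_zero_iff.mp hnz).1).1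
  have h2 := (mul_ne_zero_iff.mp (mul_ne_zero_iff.mp hnz).1).2
  have h3 := (mul_ne_zero_iff.mp hnz).2
  rw [qpoch_succ_front q (a - b + 1) m, show a - b + 1 + 1 = a - b + 2 by ring] at h1
  rw [qpoch_succ_front q (β + 1) m, show β + 1 + 1 = β + 2 by ring] at h2
  rw [qpoch_succ_front q (a + b + α + 1) m, show a + b + α + 1 + 1 = a + b + α + 2 by ring] at h3
  obtain ⟨hY1, h1'⟩ := mul_ne_zero_iff.mp h1
  obtain ⟨hY2, h2'⟩ := mul_ne_zero_iff.mp h2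
  obtain ⟨hY3, h3'⟩ := mul_ne_zero_iff.mp h3
  have hH2 := qpoch_ne_zero_of q (a - b + 2) h1' hjm
  have hH3 := qpoch_ne_zero_of q (β + 2) h2' hjm
  have hH4 := qpoch_ne_zero_of q (a + b + α + 2) h3' hjm
  have hNq : qnum q ((m : ℝ) + 1) ≠ 0 := qnum_ne_zero q hq0 hq1 (by positivity)
  have hJ : qnum q ((j : ℝ) + 1) ≠ 0 := qnum_ne_zero q hq0 hq1 (by positivity)
  have hFm := qfact_ne_zero q hq0 hq1 m
  have hH1 := qpoch_one_ne_zero q hq0 hq1 j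
  have hnum : qpoch q (-(↑m + 1)) (j + 1) * qpoch q (α + β + (↑m + 1) + 1) (j + 1) *
        qpoch q (a - (s + 1)) (j + 1) * qpoch q (a + (s + 1) + 1) (j + 1) -
      qpoch q (-(↑m + 1)) (j + 1) * qpoch q (α + β + (↑m + 1) + 1) (j + 1) *
        qpoch q (a - s) (j + 1) * qpoch q (a + s + 1) (j + 1) =
      qnum q (↑m + 1) * qnum q (α + β + (↑m + 1) + 1) * (qnum q (↑j + 1) * qnum q (2 * s + 2)) *
        (qpoch q (-↑m) j * qpoch q (α + β + ↑m + 3) j * qpoch q (a - s) j *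
          qpoch q (a + s + 2) j) := by
    rw [qpoch_succ_front q (-(↑m + 1)) j, qpoch_succ_front q (α + β + (↑m + 1) + 1) j,
      qpoch_succ_front q (a - (s + 1)) j, qpoch_succ_back q (a + (s + 1) + 1) j,
      qpoch_succ_back q (a - s) j, qpoch_succ_front q (a + s + 1) j,
      qnum_neg q hq0,
      show (-(↑m + 1) + 1 : ℝ) = -(↑m : ℝ) by ring,
      show (α + β + (↑m + 1) + 1 + 1 : ℝ) = α + β + ↑m + 3 by ring,
      show a - (s + 1) + 1 = a - s by ring,
      show a - (s + 1) = a - s - 1 by ring,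
      show a + (s + 1) + 1 = a + s + 2 by ring,
      show a + s + 1 + 1 = a + s + 2 by ring]
    linear_combination (-(qnum q ((m : ℝ) + 1)) * qnum q (α + β + ((m : ℝ) + 1) + 1) *
      qpoch q (-(m : ℝ)) j * qpoch q (α + β + (m : ℝ) + 3) j * qpoch q (a - s) j *
      qpoch q (a + s + 2) j) * qnum_key q hq0 a s (j : ℝ)
  rw [hnum, qpoch_succ_back q 1 j, qpoch_succ_front q (a - b + 1) j,
    qpoch_succ_front q (β + 1) j, qpoch_succ_front q (a + b + α + 1) j,
    qpoch_succ_front q (a - b + 1) m, qpoch_succ_front q (β + 1) m,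
    qpoch_succ_front q (a + b + α + 1) m, qfact_succ q m,
    show (1 : ℝ) + (j : ℝ) = (j : ℝ) + 1 by ring,
    show a - b + 1 + 1 = a - b + 2 by ring,
    show β + 1 + 1 = β + 2 by ring,
    show a + b + α + 1 + 1 = a + b + α + 2 by ring,
    show a + 1 / 2 - (b - 1 / 2) + 1 = a - b + 2 by ring,
    show a + 1 / 2 + (b - 1 / 2) + (α + 1) + 1 = a + b + α + 2 by ring,
    show α + 1 + (β + 1) + (m : ℝ) + 1 = α + β + (m : ℝ) + 3 by ring,
    show a + 1 / 2 - (s + 1 / 2) = a - s by ring,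
    show a + 1 / 2 + (s + 1 / 2) + 1 = a + s + 2 by ring]
  field_simp
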